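/- Let f : ℝᵈ → ℝ be differentiable and G-invariant under a permutation representation ρ, and let x̄ ∈ ℝᵈ be G-invariant (ρ[g] x̄ = x̄ for all g). For a weight function φ ∈ L²([0,1]), define e(x) = (x − x̄) ⊙ ∫₀¹ φ(t) ∇f(x̄ + t(x − x̄)) dt. Then e(ρ[g] x) = ρ[g] e(x) for all g ∈ G and x ∈ ℝᵈ. -/

import Mathlib

/-!
A permutation matrix acts on `ℝᵈ` as a linear isometry `P`. Invariance `f ∘ P = f` makes the
gradient equivariant, `∇f (P y) = P (∇f y)`, and since `P` fixes the baseline it maps the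
straight path from `x̄` to `x` onto the path from `x̄` to `P x`; a linear isometry commutes with
the integral, so the averaged gradient is equivariant. Finally a coordinate permutation commutes
with the Hadamard product.
-/

open InnerProductSpace

section Gradient

variable {E F : Type*} [NormedAddCommGroup E] [InnerProductSpace ℝ E] [CompleteSpace E]
  [NormedAddCommGroup F] [InnerProductSpace ℝ F] [CompleteSpace F]

theorem gradient_comp_linearIsometryEquiv (f : F → ℝ) (P : E ≃ₗᵢ[ℝ] F) (y : E) :
    gradient (f ∘ P) y = P.symm (gradient f (P y)) := by
  refine ext_inner_right ℝ fun v => ?_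
  rw [P.symm.inner_map_eq_flip, LinearIsometryEquiv.symm_symm, gradient, gradient,
    toDual_symm_apply, toDual_symm_apply]
  exact congrArg (· v) (P.toContinuousLinearEquiv.comp_right_fderiv (f := f) (x := y))

theorem gradient_map_of_comp_eq {f : E → ℝ} {P : E ≃ₗᵢ[ℝ] E} (hf : f ∘ P = f) (y : E) :
    gradient f (P y) = P (gradient f y) := by
  conv_rhs => rw [← hf, gradient_comp_linearIsometryEquiv, P.apply_symm_apply]

/-- The explanation `e x` of the paper is the Hadamard product of this vector with `x − x₀`. -/
noncomputable def weightedPathGradient (f : E → ℝ) (φ : ℝ → ℝ) (x₀ x : E) : E :=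
  ∫ t in (0 : ℝ)..1, φ t • gradient f (x₀ + t • (x - x₀))

theorem weightedPathGradient_map {f : E → ℝ} {P : E ≃ₗᵢ[ℝ] E} (hf : f ∘ P = f) (φ : ℝ → ℝ)
    {x₀ : E} (hx₀ : P x₀ = x₀) (x : E) :
    weightedPathGradient f φ x₀ (P x) = P (weightedPathGradient f φ x₀ x) := by
  have hpath (t : ℝ) : x₀ + t • (P x - x₀) = P (x₀ + t • (x - x₀)) := by
    rw [map_add, map_smul, map_sub, hx₀]
  simp only [weightedPathGradient, hpath, gradient_map_of_comp_eq hf]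
  simp only [← map_smul, ← LinearIsometryEquiv.coe_toLinearIsometry]
  exact P.toLinearIsometry.intervalIntegral_comp_comm _

end Gradient

theorem LinearIsometryEquiv.piLpCongrLeft_symm_apply {p : ENNReal} [Fact (1 ≤ p)] {𝕜 : Type*}
    [Semiring 𝕜] {ι ι' : Type*} [Fintype ι] [Fintype ι'] {E : Type*} [SeminormedAddCommGroup E]
    [Module 𝕜 E] (e : ι ≃ ι') (v : PiLp p fun _ : ι' => E) (i : ι) :
    piLpCongrLeft p 𝕜 E e.symm v i = v (e i) := by
  simp [Equiv.piCongrLeft']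

theorem integrated_gradients_equivariant_general {d : ℕ} {G : Type*}
    (ρ : G → Matrix (Fin d) (Fin d) ℝ)
    (hperm : ∀ g : G, ∃ π : Equiv.Perm (Fin d),
      ∀ (v : Fin d → ℝ) (i : Fin d), (ρ g).mulVec v i = v (π i))
    (f : EuclideanSpace ℝ (Fin d) → ℝ)
    (hinv : ∀ (g : G) (x : EuclideanSpace ℝ (Fin d)), f (WithLp.toLp 2 ((ρ g).mulVec x)) = f x)
    (xbar : EuclideanSpace ℝ (Fin d))
    (hbar : ∀ g : G, (ρ g).mulVec xbar = xbar)
    (φ : ℝ → ℝ)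
    (e : EuclideanSpace ℝ (Fin d) → EuclideanSpace ℝ (Fin d))
    (he : ∀ (x : EuclideanSpace ℝ (Fin d)) (i : Fin d),
      e x i = (x i - xbar i) *
        (∫ t in (0:ℝ)..1, φ t • gradient f (xbar + t • (x - xbar))) i)
    (g : G) (x : EuclideanSpace ℝ (Fin d)) :
    e (WithLp.toLp 2 ((ρ g).mulVec x)) = WithLp.toLp 2 ((ρ g).mulVec (e x)) := by
  obtain ⟨π, hπ⟩ := hperm g
  set P := LinearIsometryEquiv.piLpCongrLeft 2 ℝ ℝ π.symm
  have hP_apply (v : EuclideanSpace ℝ (Fin d)) (i : Fin d) : P v i = v (π i) :=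
    LinearIsometryEquiv.piLpCongrLeft_symm_apply π v i
  have hmulVec (v : EuclideanSpace ℝ (Fin d)) : WithLp.toLp 2 ((ρ g).mulVec v) = P v := by
    ext i
    rw [hP_apply, ← hπ v i]
  have hfP : f ∘ P = f := funext fun y => by rw [Function.comp_apply, ← hmulVec, hinv]
  have hxbar : P xbar = xbar := by rw [← hmulVec, hbar]
  have hI := weightedPathGradient_map hfP φ hxbar x
  simp only [weightedPathGradient] at hI
  ext i
  rw [hmulVec, hmulVec, he, hI, hP_apply, hP_apply, hP_apply, he, ← hP_apply xbar, hxbar]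

/-- Gradient-based explanations of the form
`e(x) = (x − x̄) ⊙ ∫₀¹ φ(t) ∇f(x̄ + t(x − x̄)) dt` (generalized Integrated
Gradients) are `G`-equivariant when `f` is `G`-invariant under a permutation
representation `ρ` and the baseline `x̄` is `G`-invariant. -/
theorem integrated_gradients_equivariant {d : ℕ} {G : Type*} [Group G]
    (ρ : G → Matrix (Fin d) (Fin d) ℝ)
    (hrep : ∀ g₁ g₂ : G, ρ (g₁ * g₂) = ρ g₁ * ρ g₂)
    (hperm : ∀ g : G, ∃ π : Equiv.Perm (Fin d),
      ∀ (v : Fin d → ℝ) (i : Fin d), (ρ g).mulVec v i = v (π i))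
    (f : EuclideanSpace ℝ (Fin d) → ℝ)
    (hdiff : Differentiable ℝ f)
    (hinv : ∀ (g : G) (x : EuclideanSpace ℝ (Fin d)), f (WithLp.toLp 2 ((ρ g).mulVec x)) = f x)
    (xbar : EuclideanSpace ℝ (Fin d))
    (hbar : ∀ g : G, (ρ g).mulVec xbar = xbar)
    (φ : ℝ → ℝ)
    (hφ : MeasureTheory.MemLp φ 2 (MeasureTheory.volume.restrict (Set.Icc (0:ℝ) 1)))
    (e : EuclideanSpace ℝ (Fin d) → EuclideanSpace ℝ (Fin d))
    (he : ∀ (x : EuclideanSpace ℝ (Fin d)) (i : Fin d),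
      e x i = (x i - xbar i) *
        (∫ t in (0:ℝ)..1, φ t • gradient f (xbar + t • (x - xbar))) i)
    (g : G) (x : EuclideanSpace ℝ (Fin d)) :
    e (WithLp.toLp 2 ((ρ g).mulVec x)) = WithLp.toLp 2 ((ρ g).mulVec (e x)) :=
  integrated_gradients_equivariant_general ρ hperm f hinv xbar hbar φ e he g x
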